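/- Every complete type is a saturated two-sided L-type: if Φ=(Φ⁺,Φ⁻) is a consistent saturated pair of sets of formulas (Φ⁺⊬Φ⁻ and Φ⁺∪Φ⁻=L), then Φ satisfies all the closure conditions of a two-sided type, e.g. if φ⇒ψ∈Φ⁺ then φ∈Φ⁻ or ψ∈Φ⁺; if φ⇐ψ∈Φ⁻ then φ∈Φ⁻ or ψ∈Φ⁺; if ◇φ∈Φ⁻ then φ∈Φ⁻; if □φ∈Φ⁺ then φ∈Φ⁺; etc. -/

import Mathlib

/-- Formulas of the Gödel temporal language. -/
inductive GF where
  | var : Nat → GF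
  | and : GF → GF → GF
  | or : GF → GF → GF
  | imp : GF → GF → GF
  | coimp : GF → GF → GF
  | next : GF → GF
  | dia : GF → GF
  | box : GF → GF
deriving DecidableEq

/-- ⊥ := p ⇐ p -/
def GF.bot : GF := .coimp (.var 0) (.var 0)
/-- ⊤ := p ⇒ p -/
def GF.top : GF := .imp (.var 0) (.var 0)
/-- ¬φ := φ ⇒ ⊥ -/
def GF.neg (φ : GF) : GF := .imp φ .bot
/-- φ ⟺ ψ := (φ⇒ψ) ∧ (ψ⇒φ) -/
def GF.iffF (φ ψ : GF) : GF := .and (.imp φ ψ) (.imp ψ φ)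

/-- The deductive calculus GTL. Intuitionistic tautologies are generated by a
standard Hilbert-style axiomatization of intuitionistic propositional logic. -/
inductive GTL : GF → Prop where
  -- intuitionistic axioms
  | i1 (φ ψ : GF) : GTL (.imp φ (.imp ψ φ))
  | i2 (φ ψ χ : GF) : GTL (.imp (.imp φ (.imp ψ χ)) (.imp (.imp φ ψ) (.imp φ χ)))
  | i3 (φ ψ : GF) : GTL (.imp (.and φ ψ) φ)
  | i4 (φ ψ : GF) : GTL (.imp (.and φ ψ) ψ)
  | i5 (φ ψ : GF) : GTL (.imp φ (.imp ψ (.and φ ψ)))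
  | i6 (φ ψ : GF) : GTL (.imp φ (.or φ ψ))
  | i7 (φ ψ : GF) : GTL (.imp ψ (.or φ ψ))
  | i8 (φ ψ χ : GF) : GTL (.imp (.imp φ χ) (.imp (.imp ψ χ) (.imp (.or φ ψ) χ)))
  | i9 (φ : GF) : GTL (.imp .bot φ)
  -- H-B axioms and rules
  | hb1 (φ ψ : GF) : GTL (.imp φ (.or ψ (.coimp φ ψ)))
  | hbMon {φ ψ : GF} (θ : GF) : GTL (.imp φ ψ) → GTL (.imp (.coimp φ θ) (.coimp ψ θ))
  | hbDis {φ ψ γ : GF} : GTL (.imp φ (.or ψ γ)) → GTL (.imp (.coimp φ ψ) γ)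
  -- linearity axioms
  | lin (φ ψ : GF) : GTL (.or (.imp φ ψ) (.imp ψ φ))
  | colin (φ ψ : GF) : GTL (GF.neg (.and (.coimp φ ψ) (.coimp ψ φ)))
  -- temporal axioms
  | nBot : GTL (GF.neg (.next .bot))
  | nOr (φ ψ : GF) : GTL (.imp (.next (.or φ ψ)) (.or (.next φ) (.next ψ)))
  | nAnd (φ ψ : GF) : GTL (.imp (.and (.next φ) (.next ψ)) (.next (.and φ ψ)))
  | nImp (φ ψ : GF) : GTL (GF.iffF (.next (.imp φ ψ)) (.imp (.next φ) (.next ψ)))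
  | kBox (φ ψ : GF) : GTL (.imp (.box (.imp φ ψ)) (.imp (.box φ) (.box ψ)))
  | kDia (φ ψ : GF) : GTL (.imp (.box (.imp φ ψ)) (.imp (.dia φ) (.dia ψ)))
  | boxFix (φ : GF) : GTL (.imp (.box φ) (.and φ (.next (.box φ))))
  | diaFix (φ : GF) : GTL (.imp (.or φ (.next (.dia φ))) (.dia φ))
  | indBox (φ : GF) : GTL (.imp (.box (.imp φ (.next φ))) (.imp φ (.box φ)))
  | indDia (φ : GF) : GTL (.imp (.box (.imp (.next φ) φ)) (.imp (.dia φ) φ))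
  -- back–up confluence axiom
  | backup (φ ψ : GF) : GTL (.imp (.next (.coimp φ ψ)) (.coimp (.next φ) (.next ψ)))
  -- standard modal rules
  | mp {φ ψ : GF} : GTL φ → GTL (.imp φ ψ) → GTL ψ
  | necN {φ : GF} : GTL φ → GTL (.next φ)
  | necBox {φ : GF} : GTL φ → GTL (.box φ)

/-- Finite conjunction (⋀∅ = ⊤). -/
def GF.conj : List GF → GF := fun l => l.foldr .and .top
/-- Finite disjunction (⋁∅ = ⊥). -/
def GF.disj : List GF → GF := fun l => l.foldr .or .bot

/-- Gentzen-style consequence: Γ ⊢ Δ iff ⋀Γ' ⇒ ⋁Δ' ∈ GTL for some finite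
Γ' ⊆ Γ, Δ' ⊆ Δ. -/
def GSeq (Γ Δ : Set GF) : Prop :=
  ∃ l m : List GF, (∀ φ ∈ l, φ ∈ Γ) ∧ (∀ φ ∈ m, φ ∈ Δ) ∧
    GTL (.imp (GF.conj l) (GF.disj m))

/-- A complete type: a consistent saturated pair. -/
def CompleteType (P N : Set GF) : Prop :=
  ¬ GSeq P N ∧ ∀ φ : GF, φ ∈ P ∨ φ ∈ N

/-- The canonical order: Φ ≤ Ψ iff Φ⁻ ⊆ Ψ⁻ and Φ⁺ ⊇ Ψ⁺. -/
def TLe (Φ Ψ : Set GF × Set GF) : Prop := Φ.2 ⊆ Ψ.2 ∧ Ψ.1 ⊆ Φ.1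

/-- The canonical successor: S(Φ) = (⊖Φ⁺, ⊖Φ⁻). -/
def TSucc (Φ : Set GF × Set GF) : Set GF × Set GF :=
  ({φ | GF.next φ ∈ Φ.1}, {φ | GF.next φ ∈ Φ.2})

/-!
A complete type is closed under GTL-consequence: if `⊢ φ ⇒ ψ` and `φ ∈ Φ⁺`, then `ψ ∈ Φ⁺`, for
otherwise saturation puts `ψ` in `Φ⁻` and `φ ⊢ ψ` contradicts consistency; dually `Φ⁻` is closed
under GTL-antecedents. In the same way `Φ⁺` is closed under `∧` and `Φ⁻` under `∨`. Each closure
condition of a two-sided type is then an instance of a GTL theorem, such as `(φ ⇒ ψ) ∧ φ ⇒ ψ`,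
`φ ⇒ ψ ∨ (φ ⇐ ψ)`, `φ ⇒ ◇φ` or `□φ ⇒ φ`.
-/

namespace GTL

theorem imp_self (φ : GF) : GTL (.imp φ φ) :=
  mp (i1 φ φ) (mp (i1 φ (.imp φ φ)) (i2 φ (.imp φ φ) φ))

theorem imp_mp {α φ ψ : GF} (hφψ : GTL (.imp α (.imp φ ψ))) (hφ : GTL (.imp α φ)) :
    GTL (.imp α ψ) :=
  mp hφ (mp hφψ (i2 α φ ψ))

theorem imp_trans {φ ψ χ : GF} (hφψ : GTL (.imp φ ψ)) (hψχ : GTL (.imp ψ χ)) :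
    GTL (.imp φ χ) :=
  imp_mp (mp hψχ (i1 (.imp ψ χ) φ)) hφψ

theorem imp_and {α φ ψ : GF} (hφ : GTL (.imp α φ)) (hψ : GTL (.imp α ψ)) :
    GTL (.imp α (.and φ ψ)) :=
  imp_mp (imp_trans hφ (i5 φ ψ)) hψ

theorem or_imp {φ ψ χ : GF} (hφ : GTL (.imp φ χ)) (hψ : GTL (.imp ψ χ)) :
    GTL (.imp (.or φ ψ) χ) :=
  mp hψ (mp hφ (i8 φ ψ χ))

theorem and_imp_imp_self (φ ψ : GF) : GTL (.imp (.and (.imp φ ψ) φ) ψ) :=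
  imp_mp (i3 _ _) (i4 _ _)

theorem imp_dia (φ : GF) : GTL (.imp φ (.dia φ)) :=
  imp_trans (i6 φ _) (diaFix φ)

theorem box_imp (φ : GF) : GTL (.imp (.box φ) φ) :=
  imp_trans (boxFix φ) (i3 φ _)

theorem coimp_imp (φ ψ : GF) : GTL (.imp (.coimp φ ψ) φ) :=
  hbDis (i7 ψ φ)

end GTL

namespace GSeq

variable {Γ Δ : Set GF} {φ ψ : GF}

theorem of_imp (hd : GTL (.imp φ ψ)) (hφ : φ ∈ Γ) (hψ : ψ ∈ Δ) : GSeq Γ Δ :=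
  ⟨[φ], [ψ], by simpa using hφ, by simpa using hψ,
    GTL.imp_trans (GTL.i3 φ _) (GTL.imp_trans hd (GTL.i6 ψ _))⟩

theorem of_mem_of_mem_of_and_mem (hφ : φ ∈ Γ) (hψ : ψ ∈ Γ) (hφψ : .and φ ψ ∈ Δ) : GSeq Γ Δ :=
  ⟨[φ, ψ], [.and φ ψ], by simp [hφ, hψ], by simpa using hφψ,
    GTL.imp_trans (GTL.imp_and (GTL.i3 _ _) (GTL.imp_trans (GTL.i4 _ _) (GTL.i3 _ _)))
      (GTL.i6 _ _)⟩

theorem of_or_mem_of_mem_of_mem (hφψ : .or φ ψ ∈ Γ) (hφ : φ ∈ Δ) (hψ : ψ ∈ Δ) : GSeq Γ Δ :=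
  ⟨[.or φ ψ], [φ, ψ], by simpa using hφψ, by simp [hφ, hψ],
    GTL.imp_trans (GTL.i3 _ _)
      (GTL.or_imp (GTL.i6 _ _) (GTL.imp_trans (GTL.i6 _ _) (GTL.i7 _ _)))⟩

end GSeq

namespace CompleteType

variable {P N : Set GF} {φ ψ : GF}

theorem not_mem_pos_and_mem_neg (h : CompleteType P N) (φ : GF) : ¬(φ ∈ P ∧ φ ∈ N) :=
  fun ⟨hP, hN⟩ => h.1 (GSeq.of_imp (GTL.imp_self φ) hP hN)

theorem mem_pos_of_imp (h : CompleteType P N) (hd : GTL (.imp φ ψ)) (hφ : φ ∈ P) : ψ ∈ P :=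
  (h.2 ψ).resolve_right fun hψ => h.1 (GSeq.of_imp hd hφ hψ)

theorem mem_neg_of_imp (h : CompleteType P N) (hd : GTL (.imp φ ψ)) (hψ : ψ ∈ N) : φ ∈ N :=
  (h.2 φ).resolve_left fun hφ => h.1 (GSeq.of_imp hd hφ hψ)

theorem and_mem_pos (h : CompleteType P N) (hφ : φ ∈ P) (hψ : ψ ∈ P) : .and φ ψ ∈ P :=
  (h.2 _).resolve_right fun hφψ => h.1 (GSeq.of_mem_of_mem_of_and_mem hφ hψ hφψ)

theorem or_mem_neg (h : CompleteType P N) (hφ : φ ∈ N) (hψ : ψ ∈ N) : .or φ ψ ∈ N :=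
  (h.2 _).resolve_left fun hφψ => h.1 (GSeq.of_or_mem_of_mem_of_mem hφψ hφ hψ)

end CompleteType

/-- Every complete type is a saturated two-sided L-type. -/
theorem stmt13 (P N : Set GF) (h : CompleteType P N) :
    (∀ φ : GF, ¬(φ ∈ P ∧ φ ∈ N)) ∧
    (∀ φ ψ : GF, GF.and φ ψ ∈ P → φ ∈ P ∧ ψ ∈ P) ∧
    (∀ φ ψ : GF, GF.and φ ψ ∈ N → φ ∈ N ∨ ψ ∈ N) ∧
    (∀ φ ψ : GF, GF.or φ ψ ∈ P → φ ∈ P ∨ ψ ∈ P) ∧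
    (∀ φ ψ : GF, GF.or φ ψ ∈ N → φ ∈ N ∧ ψ ∈ N) ∧
    (∀ φ ψ : GF, GF.imp φ ψ ∈ P → φ ∈ N ∨ ψ ∈ P) ∧
    (∀ φ ψ : GF, GF.imp φ ψ ∈ N → ψ ∈ N) ∧
    (∀ φ ψ : GF, GF.coimp φ ψ ∈ N → φ ∈ N ∨ ψ ∈ P) ∧
    (∀ φ ψ : GF, GF.coimp φ ψ ∈ P → φ ∈ P) ∧
    (∀ φ : GF, GF.dia φ ∈ N → φ ∈ N) ∧
    (∀ φ : GF, GF.box φ ∈ P → φ ∈ P) := by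
  have mem_pos {φ : GF} : φ ∉ N → φ ∈ P := (h.2 φ).resolve_right
  have mem_neg {φ : GF} : φ ∉ P → φ ∈ N := (h.2 φ).resolve_left
  refine ⟨h.not_mem_pos_and_mem_neg, fun φ ψ hP => ⟨?_, ?_⟩, fun φ ψ hN => ?_, fun φ ψ hP => ?_,
    fun φ ψ hN => ⟨?_, ?_⟩, fun φ ψ hP => ?_, fun φ ψ hN => ?_, fun φ ψ hN => ?_,
    fun φ ψ hP => ?_, fun φ hN => ?_, fun φ hP => ?_⟩
  · exact h.mem_pos_of_imp (GTL.i3 φ ψ) hP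
  · exact h.mem_pos_of_imp (GTL.i4 φ ψ) hP
  · by_contra! hφψ
    exact h.not_mem_pos_and_mem_neg _ ⟨h.and_mem_pos (mem_pos hφψ.1) (mem_pos hφψ.2), hN⟩
  · by_contra! hφψ
    exact h.not_mem_pos_and_mem_neg _ ⟨hP, h.or_mem_neg (mem_neg hφψ.1) (mem_neg hφψ.2)⟩
  · exact h.mem_neg_of_imp (GTL.i6 φ ψ) hN
  · exact h.mem_neg_of_imp (GTL.i7 φ ψ) hN
  · exact or_iff_not_imp_left.2 fun hφ =>
      h.mem_pos_of_imp (GTL.and_imp_imp_self φ ψ) (h.and_mem_pos hP (mem_pos hφ))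
  · exact h.mem_neg_of_imp (GTL.i1 ψ φ) hN
  · exact or_iff_not_imp_right.2 fun hψ =>
      h.mem_neg_of_imp (GTL.hb1 φ ψ) (h.or_mem_neg (mem_neg hψ) hN)
  · exact h.mem_pos_of_imp (GTL.coimp_imp φ ψ) hP
  · exact h.mem_neg_of_imp (GTL.imp_dia φ) hN
  · exact h.mem_pos_of_imp (GTL.box_imp φ) hP
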